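/- arXiv:1703.08980 — 2 statements merged into one kernel-verified Lean document; each statement's English description precedes it below -/
import Mathlib

section
/- Let r ≥ 2, m ≥ 1, k ≥ 0, and let (A, μ) be the multi-arrangement in ℂ² with defining polynomial Q(A,μ) = x^{kr+1} y^{kr+1} (x^r − y^r)^{2m+1}. Then (A,μ) is free with exponents exp(A,μ) = { (m+k)r + 1, (m+k+1)r + 1 }. Moreover, there are homogeneous polynomials q_1, q_2 ∈ ℤ[x,y] of degree m such that (i) the coefficients of x^m and of y^m in both q_1 and q_2 are nonzero, and (ii) the homogeneous derivations θ_1 := x^{kr+1} q_1(x^r, y^r) ∂_x + y^{kr+1} q_1(y^r, x^r) ∂_y and θ_2 := x^{kr+1} y^r q_2(x^r, y^r) ∂_x + y^{kr+1} x^r q_2(y^r, x^r) ∂_y form an S-basis of D(A,μ). -/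
open MvPolynomial

noncomputable section

abbrev PolyS (ℓ : ℕ) := MvPolynomial (Fin ℓ) ℂ

/-- Membership in `D(A, μ)` for the multi-arrangement in `ℂ^ℓ` consisting of the
coordinate hyperplanes `ker x_i` with multiplicity `mult0 i` and the hyperplanes
`ker (x_i - ζ x_j)` (for `i < j` and `ζ` an `r`-th root of unity) with
multiplicity `multH`.  (A multiplicity `0` means the hyperplane is absent.) -/
def InDeriv {ℓ : ℕ} (r : ℕ) (mult0 : Fin ℓ → ℕ) (multH : ℕ)
    (θ : Derivation ℂ (PolyS ℓ) (PolyS ℓ)) : Prop :=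
  (∀ i, θ (X i) ∈ Ideal.span {(X i : PolyS ℓ) ^ mult0 i}) ∧
  ∀ i j : Fin ℓ, i < j → ∀ ζ : ℂ, ζ ^ r = 1 →
    θ (X i - C ζ * X j) ∈ Ideal.span {(X i - C ζ * X j : PolyS ℓ) ^ multH}

/-- `θ` is homogeneous of polynomial degree `p`. -/
def IsHomogDeriv {ℓ : ℕ} (θ : Derivation ℂ (PolyS ℓ) (PolyS ℓ)) (p : ℕ) : Prop :=
  ∀ i, (θ (X i)).IsHomogeneous p

/-- The multi-arrangement with derivation-module membership predicate `P` is free with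
exponents `e 0, …, e (ℓ-1)`: there is a basis of the module of derivations consisting
of `ℓ` homogeneous derivations of polynomial degrees `e 0, …, e (ℓ-1)`. -/
def IsFreeWithExponents {ℓ : ℕ} (P : Derivation ℂ (PolyS ℓ) (PolyS ℓ) → Prop)
    (e : Fin ℓ → ℕ) : Prop :=
  ∃ θ : Fin ℓ → Derivation ℂ (PolyS ℓ) (PolyS ℓ),
    (∀ i, P (θ i)) ∧
    LinearIndependent (PolyS ℓ) θ ∧
    (∀ η, P η → η ∈ Submodule.span (PolyS ℓ) (Set.range θ)) ∧
    (∀ i, IsHomogDeriv (θ i) (e i))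

/-- Variant of `IsFreeWithExponents` with the exponents given as integers. -/
def IsFreeWithExponentsZ {ℓ : ℕ} (P : Derivation ℂ (PolyS ℓ) (PolyS ℓ) → Prop)
    (e : Fin ℓ → ℤ) : Prop :=
  ∃ θ : Fin ℓ → Derivation ℂ (PolyS ℓ) (PolyS ℓ),
    (∀ i, P (θ i)) ∧
    LinearIndependent (PolyS ℓ) θ ∧
    (∀ η, P η → η ∈ Submodule.span (PolyS ℓ) (Set.range θ)) ∧
    (∀ i, ∃ p : ℕ, (p : ℤ) = e i ∧ IsHomogDeriv (θ i) p)

/-!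
The `x`-component of `θ = x^a y^b q(x^r, y^r) ∂_x + y^a x^b q(y^r, x^r) ∂_y`, where
`q = ∑ c_i x^i y^(m-i)`, is `∑ c_i x^(A_i) y^(B_i)` with `A_i + B_i` independent of `i`. Expanding
in `x - ζy` for an `r`-th root of unity `ζ`, the coefficient of `(x - ζy)^j` in `θ(x - ζy)` is a
multiple of `∑ c_i (binom(A_i, j) - binom(B_i, j))`, so `θ ∈ D(A, μ)` as soon as these sums vanish
for `j ≤ 2m`. Since `A_i + B_i` is fixed, this reduces to `∑ c_i E_i^(2p+1) = 0` for `p < m`, where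
`E_i = A_i - B_i = r(w + 2i) + 1`. Taking for `c_i E_i` the signed maximal minors of the Vandermonde
matrix in the `E_i^2`, times `∏ E_j`, solves this with all `c_i ≠ 0`, because `r ≥ 2` makes the
`E_i^2` distinct and nonzero.

Saito's criterion then finishes: the determinant of `θ₁, θ₂` is divisible by `Q(A, μ)` and has the
same degree, and it is nonzero because, after dividing by `(xy)^(kr+1)`, its value at `(1, 0)` is
the product of the coefficients of `x^m` in `q₁` and of `y^m` in `q₂`.
-/

local notation "Der₂" R => Derivation R (MvPolynomial (Fin 2) R) (MvPolynomial (Fin 2) R)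

section OddMoments

variable {R : Type*} [CommRing R] {m : ℕ}

theorem sum_neg_one_pow_mul_det_vandermonde_succAbove_mul_pow (U : Fin (m + 1) → R) {p : ℕ}
    (hp : p < m) :
    ∑ i : Fin (m + 1), (-1) ^ (i : ℕ) * U i ^ p *
      (Matrix.vandermonde fun t => U (i.succAbove t)).det = 0 := by
  -- Laplace expansion of a determinant whose column `0` repeats column `p + 1`
  let M : Matrix (Fin (m + 1)) (Fin (m + 1)) R := fun i => Fin.cons (U i ^ p) fun s => U i ^ (s : ℕ)
  have hM : M.det = 0 :=
    Matrix.det_zero_of_column_eq (Fin.succ_ne_zero ⟨p, hp⟩).symm fun _ => rfl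
  rwa [Matrix.det_succ_column_zero] at hM

def oddMomentKernel (E : Fin (m + 1) → R) (i : Fin (m + 1)) : R :=
  (-1) ^ (i : ℕ) * (Matrix.vandermonde fun t => E (i.succAbove t) ^ 2).det *
    ∏ j ∈ Finset.univ.erase i, E j

theorem sum_oddMomentKernel_mul_pow_odd (E : Fin (m + 1) → R) {p : ℕ} (hp : p < m) :
    ∑ i, oddMomentKernel E i * E i ^ (2 * p + 1) = 0 := by
  have key (i : Fin (m + 1)) : oddMomentKernel E i * E i ^ (2 * p + 1) = (∏ j, E j) *
      ((-1) ^ (i : ℕ) * (E i ^ 2) ^ p *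
        (Matrix.vandermonde fun t => E (i.succAbove t) ^ 2).det) := by
    rw [oddMomentKernel, ← Finset.mul_prod_erase _ _ (Finset.mem_univ i)]
    ring
  rw [Finset.sum_congr rfl fun i _ => key i, ← Finset.mul_sum,
    sum_neg_one_pow_mul_det_vandermonde_succAbove_mul_pow (fun i => E i ^ 2) hp, mul_zero]

theorem oddMomentKernel_ne_zero [IsDomain R] {E : Fin (m + 1) → R} (hE : ∀ i, E i ≠ 0)
    (hE2 : Function.Injective fun i => E i ^ 2) (i : Fin (m + 1)) : oddMomentKernel E i ≠ 0 :=
  mul_ne_zero (mul_ne_zero (pow_ne_zero _ (neg_ne_zero.2 one_ne_zero))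
    (Matrix.det_vandermonde_ne_zero_iff.2 (hE2.comp (Fin.succAbove_right_injective))))
    (Finset.prod_ne_zero_iff.2 fun j _ => hE j)

end OddMoments

section PowerSums

variable {ι R : Type*} [Fintype ι] [CommRing R] {m : ℕ}

theorem sum_mul_add_pow_sub_sub_pow_eq_zero (u E : ι → R) (D : R)
    (hodd : ∀ p < m, ∑ i, u i * E i ^ (2 * p + 1) = 0) {j : ℕ} (hj : j ≤ 2 * m) :
    ∑ i, u i * ((D + E i) ^ j - (D - E i) ^ j) = 0 := by
  have hparity : ∀ l ≤ j, ∑ i, u i * (E i ^ l - (-E i) ^ l) = 0 := by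
    intro l hl
    rcases Nat.even_or_odd l with hl' | ⟨p, rfl⟩
    · simp [hl'.neg_pow]
    · have hsum := hodd p (by omega)
      simp only [Odd.neg_pow ⟨p, rfl⟩, sub_neg_eq_add, ← two_mul, mul_left_comm _ (2 : R),
        ← Finset.mul_sum, hsum, mul_zero]
  calc ∑ i, u i * ((D + E i) ^ j - (D - E i) ^ j)
      = ∑ l ∈ Finset.range (j + 1),
          D ^ (j - l) * j.choose l * ∑ i, u i * (E i ^ l - (-E i) ^ l) := by
        simp only [add_comm D, sub_eq_neg_add D, add_pow, ← Finset.sum_sub_distrib,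
          Finset.mul_sum]
        rw [Finset.sum_comm]
        refine Finset.sum_congr rfl fun l _ => Finset.sum_congr rfl fun i _ => ?_
        ring
    _ = 0 := Finset.sum_eq_zero fun l hl =>
        by rw [hparity l (Nat.lt_succ_iff.1 (Finset.mem_range.1 hl)), mul_zero]

theorem sum_mul_pow_sub_pow_eq_zero [NoZeroDivisors R] [CharZero R] (u A B : ι → R) (D : R)
    (hD : ∀ i, A i + B i = D) (hodd : ∀ p < m, ∑ i, u i * (A i - B i) ^ (2 * p + 1) = 0)
    {j : ℕ} (hj : j ≤ 2 * m) :
    ∑ i, u i * (A i ^ j - B i ^ j) = 0 := by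
  have h := sum_mul_add_pow_sub_sub_pow_eq_zero u (fun i => A i - B i) D hodd hj
  have h2 (i : ι) : u i * ((D + (A i - B i)) ^ j - (D - (A i - B i)) ^ j) =
      2 ^ j * (u i * (A i ^ j - B i ^ j)) := by
    rw [← hD i]; ring
  rw [Finset.sum_congr rfl fun i _ => h2 i, ← Finset.mul_sum] at h
  exact (mul_eq_zero.1 h).resolve_left (pow_ne_zero _ two_ne_zero)

theorem sum_mul_eval_sub_eval_eq_zero (u A B : ι → R) {N : ℕ}
    (hpow : ∀ j < N, ∑ i, u i * (A i ^ j - B i ^ j) = 0) {f : Polynomial R}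
    (hf : f.natDegree < N) :
    ∑ i, u i * (f.eval (A i) - f.eval (B i)) = 0 := by
  simp only [Polynomial.eval_eq_sum_range' hf, ← Finset.sum_sub_distrib, Finset.mul_sum]
  rw [Finset.sum_comm]
  refine Finset.sum_eq_zero fun j hj => ?_
  rw [← mul_zero (f.coeff j), ← hpow j (Finset.mem_range.1 hj), Finset.mul_sum]
  exact Finset.sum_congr rfl fun i _ => by ring

theorem sum_mul_choose_sub_choose_eq_zero [NoZeroDivisors R] [CharZero R] (u : ι → R)
    (A B : ι → ℕ) {N : ℕ} (hpow : ∀ j < N, ∑ i, u i * ((A i : R) ^ j - (B i : R) ^ j) = 0)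
    {j : ℕ} (hj : j < N) :
    ∑ i, u i * (((A i).choose j : R) - (B i).choose j) = 0 := by
  have h := sum_mul_eval_sub_eval_eq_zero u (fun i => (A i : R)) (fun i => (B i : R)) hpow
    (f := descPochhammer R j) (by rwa [descPochhammer_natDegree])
  simp only [descPochhammer_eval_eq_descFactorial, Nat.descFactorial_eq_factorial_mul_choose,
    Nat.cast_mul, ← mul_sub, mul_left_comm (u _), ← Finset.mul_sum] at h
  exact (mul_eq_zero.1 h).resolve_left (Nat.cast_ne_zero.2 j.factorial_ne_zero)

end PowerSums

theorem sum_oddMomentKernel_mul_choose_sub_choose_eq_zero {R : Type*} [CommRing R]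
    [NoZeroDivisors R] [CharZero R] {m D : ℕ} (E : Fin (m + 1) → R) (A B : Fin (m + 1) → ℕ)
    (hE : ∀ i, (A i : R) - B i = E i) (hD : ∀ i, A i + B i = D) {j : ℕ} (hj : j < 2 * m + 1) :
    ∑ i, oddMomentKernel E i * (((A i).choose j : R) - (B i).choose j) = 0 := by
  refine sum_mul_choose_sub_choose_eq_zero _ A B (fun l hl => ?_) hj
  refine sum_mul_pow_sub_pow_eq_zero _ _ _ (D : R) (fun i => by rw [← hD i, Nat.cast_add])
    (fun p hp => ?_) (Nat.lt_succ_iff.1 hl)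
  simpa only [hE] using sum_oddMomentKernel_mul_pow_odd E hp

section Taylor

variable {ι S : Type*} [Fintype ι] [CommRing S]

theorem pow_mul_pow_eq_sum_choose_mul_sub_pow (x t : S) {A B D : ℕ} (h : A + B = D) :
    x ^ A * t ^ B = ∑ j ∈ Finset.range (D + 1), (A.choose j : S) * (x - t) ^ j * t ^ (D - j) := by
  calc x ^ A * t ^ B
      = ∑ j ∈ Finset.range (A + 1), (A.choose j : S) * (x - t) ^ j * t ^ (D - j) := by
        rw [← sub_add_cancel x t, add_pow, Finset.sum_mul, sub_add_cancel]
        refine Finset.sum_congr rfl fun j hj => ?_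
        rw [show D - j = A - j + B by have := Finset.mem_range.1 hj; omega, pow_add]
        ring
    _ = _ := Finset.sum_subset (Finset.range_subset_range.2 (by omega)) fun j _ hj => by
        rw [Finset.mem_range, not_lt] at hj
        rw [Nat.choose_eq_zero_of_lt hj, Nat.cast_zero, zero_mul, zero_mul]

theorem sub_pow_dvd_sum_mul_pow_mul_pow_sub (x t : S) (u : ι → S) (A B : ι → ℕ) {D N : ℕ}
    (hD : ∀ i, A i + B i = D)
    (hsum : ∀ j < N, ∑ i, u i * (((A i).choose j : S) - (B i).choose j) = 0) :
    (x - t) ^ N ∣ ∑ i, u i * (x ^ A i * t ^ B i - x ^ B i * t ^ A i) := by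
  have hexpand : ∑ i, u i * (x ^ A i * t ^ B i - x ^ B i * t ^ A i) =
      ∑ j ∈ Finset.range (D + 1),
        (x - t) ^ j * t ^ (D - j) * ∑ i, u i * (((A i).choose j : S) - (B i).choose j) := by
    simp only [pow_mul_pow_eq_sum_choose_mul_sub_pow x t (hD _),
      pow_mul_pow_eq_sum_choose_mul_sub_pow x t ((add_comm _ _).trans (hD _)),
      ← Finset.sum_sub_distrib, Finset.mul_sum]
    rw [Finset.sum_comm]
    exact Finset.sum_congr rfl fun j _ => Finset.sum_congr rfl fun i _ => by ring
  rw [hexpand]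
  refine Finset.dvd_sum fun j _ => ?_
  rcases lt_or_ge j N with hj | hj
  · rw [hsum j hj, mul_zero]
    exact dvd_zero _
  · exact (pow_dvd_pow _ hj).mul_right _ |>.mul_right _

end Taylor

section BinaryForm

variable {R : Type*} [CommSemiring R] {m : ℕ}

def binaryForm (c : Fin (m + 1) → R) : MvPolynomial (Fin 2) R :=
  ∑ i : Fin (m + 1), C (c i) * X 0 ^ (i : ℕ) * X 1 ^ (m - i)

theorem binaryForm_isHomogeneous (c : Fin (m + 1) → R) : (binaryForm c).IsHomogeneous m :=
  IsHomogeneous.sum _ _ _ fun i _ => by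
    simpa [Nat.add_sub_cancel' i.is_le] using
      ((isHomogeneous_C_mul_X_pow (c i) 0 i).mul (isHomogeneous_X_pow (R := R) 1 (m - i)))

theorem coeff_binaryForm (c : Fin (m + 1) → R) (i : Fin (m + 1)) :
    coeff (Finsupp.single 0 (i : ℕ) + Finsupp.single 1 (m - i)) (binaryForm c) = c i := by
  have hmon (j : Fin (m + 1)) : (C (c j) * X 0 ^ (j : ℕ) * X 1 ^ (m - j) : MvPolynomial (Fin 2) R) =
      monomial (Finsupp.single 0 (j : ℕ) + Finsupp.single 1 (m - j)) (c j) := by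
    rw [mul_assoc, X_pow_eq_monomial, X_pow_eq_monomial, monomial_mul, C_mul_monomial, one_mul,
      mul_one]
  rw [binaryForm, coeff_sum, Finset.sum_eq_single i]
  · rw [hmon, coeff_monomial, if_pos rfl]
  · intro j _ hji
    rw [hmon, coeff_monomial, if_neg]
    intro h
    exact hji (Fin.ext (by simpa using DFunLike.congr_fun h 0))
  · exact fun h => absurd (Finset.mem_univ i) h

theorem coeff_single_zero_binaryForm (c : Fin (m + 1) → R) :
    coeff (Finsupp.single 0 m) (binaryForm c) = c (Fin.last m) := by
  simpa using coeff_binaryForm c (Fin.last m)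

theorem coeff_single_one_binaryForm (c : Fin (m + 1) → R) :
    coeff (Finsupp.single 1 m) (binaryForm c) = c 0 := by
  simpa using coeff_binaryForm c 0

theorem aeval_binaryForm {S : Type*} [CommSemiring S] [Algebra R S] (c : Fin (m + 1) → R)
    (f g : S) :
    aeval ![f, g] (binaryForm c) =
      ∑ i : Fin (m + 1), algebraMap R S (c i) * f ^ (i : ℕ) * g ^ (m - i) := by
  simp [binaryForm]

theorem aeval_one_zero_binaryForm {S : Type*} [CommSemiring S] [Algebra R S] (c : Fin (m + 1) → R) :
    aeval ![(1 : S), 0] (binaryForm c) = algebraMap R S (c (Fin.last m)) := by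
  rw [aeval_binaryForm, Finset.sum_eq_single (Fin.last m)]
  · simp
  · intro i _ hi
    rw [zero_pow, mul_zero]
    have := Fin.val_lt_last hi
    omega
  · exact fun h => absurd (Finset.mem_univ _) h

theorem aeval_zero_one_binaryForm {S : Type*} [CommSemiring S] [Algebra R S] (c : Fin (m + 1) → R) :
    aeval ![(0 : S), 1] (binaryForm c) = algebraMap R S (c 0) := by
  rw [aeval_binaryForm, Finset.sum_eq_single 0]
  · simp
  · intro i _ hi
    rw [zero_pow (Fin.val_ne_zero_iff.2 hi), mul_zero, zero_mul]
  · exact fun h => absurd (Finset.mem_univ _) h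

end BinaryForm

section DerivDet

variable {R : Type*} [CommRing R]

def derivDet (θ η : Der₂ R) : MvPolynomial (Fin 2) R :=
  θ (X 0) * η (X 1) - θ (X 1) * η (X 0)

theorem derivDet_smul (θ₁ θ₂ η : Der₂ R) :
    derivDet θ₁ θ₂ • η = derivDet η θ₂ • θ₁ + derivDet θ₁ η • θ₂ := by
  refine derivation_ext (Fin.forall_fin_two.2 ⟨?_, ?_⟩) <;>
  · simp only [derivDet, Derivation.smul_apply, Derivation.add_apply, smul_eq_mul]
    ring

theorem linearIndependent_pair_of_derivDet_ne_zero [IsDomain R] {θ₁ θ₂ : Der₂ R}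
    (h : derivDet θ₁ θ₂ ≠ 0) : LinearIndependent (MvPolynomial (Fin 2) R) ![θ₁, θ₂] := by
  refine LinearIndependent.pair_iff.2 fun s t hst => ?_
  have hx : s * θ₁ (X 0) + t * θ₂ (X 0) = 0 := by simpa using congrArg (· (X 0)) hst
  have hy : s * θ₁ (X 1) + t * θ₂ (X 1) = 0 := by simpa using congrArg (· (X 1)) hst
  refine ⟨(mul_eq_zero.1 ?_).resolve_right h, (mul_eq_zero.1 ?_).resolve_right h⟩ <;>
    unfold derivDet
  · linear_combination θ₂ (X 1) * hx - θ₂ (X 0) * hy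
  · linear_combination θ₁ (X 0) * hy - θ₁ (X 1) * hx

theorem mem_span_pair_of_derivDet_dvd [IsDomain R] {θ₁ θ₂ η : Der₂ R}
    (h : derivDet θ₁ θ₂ ≠ 0) (h₁ : derivDet θ₁ θ₂ ∣ derivDet η θ₂)
    (h₂ : derivDet θ₁ θ₂ ∣ derivDet θ₁ η) :
    η ∈ Submodule.span (MvPolynomial (Fin 2) R) {θ₁, θ₂} := by
  obtain ⟨g₁, hg₁⟩ := h₁
  obtain ⟨g₂, hg₂⟩ := h₂
  refine Submodule.mem_span_pair.2 ⟨g₁, g₂, derivation_ext fun i => mul_left_cancel₀ h ?_⟩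
  have := congrArg (· (X i)) (derivDet_smul θ₁ θ₂ η)
  simp only [Derivation.smul_apply, Derivation.add_apply, smul_eq_mul, hg₁, hg₂] at this ⊢
  linear_combination -this

end DerivDet

section Divisibility

variable {K : Type*} [Field K]

theorem associated_of_dvd_of_isHomogeneous {σ : Type*} {P Q : MvPolynomial σ K}
    {N : ℕ} (hQ : Q.IsHomogeneous N) (hP : P.IsHomogeneous N) (hP₀ : P ≠ 0) (h : Q ∣ P) :
    Associated Q P := by
  obtain ⟨g, rfl⟩ := h
  obtain ⟨hQ₀, hg₀⟩ := mul_ne_zero_iff.1 hP₀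
  have hdeg : g.totalDegree = 0 := by
    have := totalDegree_mul_of_isDomain hQ₀ hg₀
    rw [hP.totalDegree hP₀, hQ.totalDegree hQ₀] at this
    omega
  rw [totalDegree_eq_zero_iff_eq_C] at hdeg
  refine associated_mul_unit_right Q g ?_
  rw [hdeg] at hg₀ ⊢
  exact (isUnit_iff_ne_zero.2 fun h => hg₀ (by rw [h, C_0])).map C

theorem isRelPrime_X_zero_X_one : IsRelPrime (X 0 : MvPolynomial (Fin 2) K) (X 1) := by
  refine (X_prime.irreducible).isRelPrime_iff_not_dvd.2 fun h => ?_
  simpa using map_dvd (aeval ![(0 : K), 1]) h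

theorem isRelPrime_C_mul_X_add_C_mul_X {a b c d : K} (h : a * d - b * c ≠ 0) :
    IsRelPrime (C a * X 0 + C b * X 1 : MvPolynomial (Fin 2) K) (C c * X 0 + C d * X 1) := by
  intro e he₁ he₂
  have hu : IsUnit (C (a * d - b * c) : MvPolynomial (Fin 2) K) := (isUnit_iff_ne_zero.2 h).map C
  refine isRelPrime_X_zero_X_one (K := K) ?_ ?_
  · rw [← hu.dvd_mul_left]
    convert dvd_sub (he₁.mul_left (C d)) (he₂.mul_left (C b)) using 1
    simp only [map_sub, map_mul]
    ring
  · rw [← hu.dvd_mul_left]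
    convert dvd_sub (he₂.mul_left (C a)) (he₁.mul_left (C c)) using 1
    simp only [map_sub, map_mul]
    ring

theorem isRelPrime_X_zero_sub {ζ : K} (hζ : ζ ≠ 0) :
    IsRelPrime (X 0 : MvPolynomial (Fin 2) K) (X 0 - C ζ * X 1) := by
  simpa [sub_eq_add_neg] using isRelPrime_C_mul_X_add_C_mul_X (a := 1) (b := 0) (c := 1) (d := -ζ)
    (by simpa using hζ)

theorem isRelPrime_X_one_sub (ζ : K) :
    IsRelPrime (X 1 : MvPolynomial (Fin 2) K) (X 0 - C ζ * X 1) := by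
  simpa [sub_eq_add_neg] using isRelPrime_C_mul_X_add_C_mul_X (a := 0) (b := 1) (c := 1) (d := -ζ)
    (by simp)

theorem isRelPrime_sub_sub {ζ ζ' : K} (h : ζ ≠ ζ') :
    IsRelPrime (X 0 - C ζ * X 1 : MvPolynomial (Fin 2) K) (X 0 - C ζ' * X 1) := by
  simpa [sub_eq_add_neg] using isRelPrime_C_mul_X_add_C_mul_X (a := 1) (b := -ζ) (c := 1)
    (d := -ζ') fun h' => h (by linear_combination h')

end Divisibility

section Arrangement

theorem inDeriv_two_iff {r a n : ℕ} {θ : Der₂ ℂ} :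
    InDeriv r ![a, a] n θ ↔ X 0 ^ a ∣ θ (X 0) ∧ X 1 ^ a ∣ θ (X 1) ∧
      ∀ ζ : ℂ, ζ ^ r = 1 → (X 0 - C ζ * X 1) ^ n ∣ θ (X 0) - C ζ * θ (X 1) := by
  simp [InDeriv, Fin.forall_fin_two, Ideal.mem_span_singleton, and_assoc]

def definingPoly (r a n : ℕ) : PolyS 2 :=
  X 0 ^ a * X 1 ^ a * ∏ ζ ∈ Polynomial.nthRootsFinset r (1 : ℂ), (X 0 - C ζ * X 1) ^ n

theorem definingPoly_dvd_derivDet {r a n : ℕ} (hr : 0 < r) {θ η : Der₂ ℂ}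
    (hθ : InDeriv r ![a, a] n θ) (hη : InDeriv r ![a, a] n η) :
    definingPoly r a n ∣ derivDet θ η := by
  rw [inDeriv_two_iff] at hθ hη
  obtain ⟨hθ₀, hθ₁, hθL⟩ := hθ
  obtain ⟨hη₀, hη₁, hηL⟩ := hη
  have hroot {ζ : ℂ} (hζ : ζ ∈ Polynomial.nthRootsFinset r (1 : ℂ)) : ζ ^ r = 1 :=
    (Polynomial.mem_nthRootsFinset hr 1).1 hζ
  have hprod : ∏ ζ ∈ Polynomial.nthRootsFinset r (1 : ℂ), (X 0 - C ζ * X 1) ^ n ∣ derivDet θ η := by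
    refine Finset.prod_dvd_of_isRelPrime (fun ζ _ ζ' _ h => (isRelPrime_sub_sub h).pow) ?_
    intro ζ hζ
    rw [show derivDet θ η =
      (θ (X 0) - C ζ * θ (X 1)) * η (X 1) - θ (X 1) * (η (X 0) - C ζ * η (X 1)) by
        rw [derivDet]; ring]
    exact dvd_sub ((hθL ζ (hroot hζ)).mul_right _) ((hηL ζ (hroot hζ)).mul_left _)
  have hζ₀ {ζ : ℂ} (hζ : ζ ∈ Polynomial.nthRootsFinset r (1 : ℂ)) : ζ ≠ 0 := by
    rintro rfl
    simpa [hr.ne'] using hroot hζ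
  refine IsRelPrime.mul_dvd ?_ (IsRelPrime.mul_dvd ?_ ?_ ?_) hprod
  · exact IsRelPrime.mul_left (.prod_right fun ζ hζ => (isRelPrime_X_zero_sub (hζ₀ hζ)).pow)
      (.prod_right fun ζ _ => (isRelPrime_X_one_sub ζ).pow)
  · exact isRelPrime_X_zero_X_one.pow
  · exact dvd_sub (hθ₀.mul_right _) (hη₀.mul_left _)
  · exact dvd_sub (hη₁.mul_left _) (hθ₁.mul_right _)


theorem IsHomogDeriv.derivDet {θ η : Der₂ ℂ} {p q : ℕ} (hθ : IsHomogDeriv θ p)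
    (hη : IsHomogDeriv η q) : (derivDet θ η).IsHomogeneous (p + q) :=
  ((hθ 0).mul (hη 1)).sub ((hθ 1).mul (hη 0))

theorem definingPoly_isHomogeneous {r : ℕ} (hr : 0 < r) (a n : ℕ) :
    (definingPoly r a n).IsHomogeneous (2 * a + r * n) := by
  have hcard : (Polynomial.nthRootsFinset r (1 : ℂ)).card = r :=
    (Complex.isPrimitiveRoot_exp r hr.ne').card_nthRootsFinset
  have hlin (ζ : ℂ) : (X 0 - C ζ * X 1 : PolyS 2).IsHomogeneous 1 :=
    (isHomogeneous_X _ _).sub ((isHomogeneous_X _ _).C_mul ζ)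
  have hprod := IsHomogeneous.prod (Polynomial.nthRootsFinset r (1 : ℂ))
    (fun ζ => (X 0 - C ζ * X 1 : PolyS 2) ^ n) (fun _ => n) fun ζ _ => by
      simpa using (hlin ζ).pow n
  rw [Finset.sum_const, hcard, smul_eq_mul] at hprod
  rw [definingPoly, two_mul]
  exact ((isHomogeneous_X_pow 0 a).mul (isHomogeneous_X_pow 1 a)).mul hprod

theorem mem_span_of_inDeriv {r a n : ℕ} (hr : 0 < r) {θ₁ θ₂ η : Der₂ ℂ}
    (hθ₁ : InDeriv r ![a, a] n θ₁) (hθ₂ : InDeriv r ![a, a] n θ₂) {p₁ p₂ : ℕ}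
    (hp₁ : IsHomogDeriv θ₁ p₁) (hp₂ : IsHomogDeriv θ₂ p₂) (hdeg : p₁ + p₂ = 2 * a + r * n)
    (hdet : derivDet θ₁ θ₂ ≠ 0) (hη : InDeriv r ![a, a] n η) :
    η ∈ Submodule.span (PolyS 2) {θ₁, θ₂} := by
  have hassoc : Associated (definingPoly r a n) (derivDet θ₁ θ₂) :=
    associated_of_dvd_of_isHomogeneous (definingPoly_isHomogeneous hr a n)
      (hdeg ▸ hp₁.derivDet hp₂) hdet (definingPoly_dvd_derivDet hr hθ₁ hθ₂)
  exact mem_span_pair_of_derivDet_dvd hdet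
    (hassoc.symm.dvd.trans (definingPoly_dvd_derivDet hr hη hθ₂))
    (hassoc.symm.dvd.trans (definingPoly_dvd_derivDet hr hθ₁ hη))

end Arrangement

section SymmetricDeriv

def symmetricDeriv (a b r : ℕ) (q : MvPolynomial (Fin 2) ℤ) : Der₂ ℂ :=
  mkDerivation ℂ ![X 0 ^ a * X 1 ^ b * aeval ![(X 0 : PolyS 2) ^ r, X 1 ^ r] q,
    X 1 ^ a * X 0 ^ b * aeval ![(X 1 : PolyS 2) ^ r, X 0 ^ r] q]

theorem symmetricDeriv_zero (a r : ℕ) (q : MvPolynomial (Fin 2) ℤ) :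
    symmetricDeriv a 0 r q = mkDerivation ℂ ![X 0 ^ a * aeval ![(X 0 : PolyS 2) ^ r, X 1 ^ r] q,
      X 1 ^ a * aeval ![(X 1 : PolyS 2) ^ r, X 0 ^ r] q] := by
  simp [symmetricDeriv]

variable {a b r : ℕ} {q : MvPolynomial (Fin 2) ℤ}

theorem isHomogDeriv_symmetricDeriv {m p : ℕ} (hq : q.IsHomogeneous m) (hp : a + b + r * m = p) :
    IsHomogDeriv (symmetricDeriv a b r q) p := by
  subst hp
  have hX (i j : Fin 2) :
      (X i ^ a * X j ^ b * aeval ![(X i : PolyS 2) ^ r, X j ^ r] q).IsHomogeneous (a + b + r * m) :=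
    ((isHomogeneous_X_pow i a).mul (isHomogeneous_X_pow j b)).mul
      (hq.aeval _ (Fin.forall_fin_two.2 ⟨isHomogeneous_X_pow i r, isHomogeneous_X_pow j r⟩))
  refine Fin.forall_fin_two.2 ⟨?_, ?_⟩ <;> simpa [symmetricDeriv] using hX _ _

theorem eval_aeval_X_pow (v : Fin 2 → ℂ) (i j : Fin 2) :
    eval v (aeval ![(X i : PolyS 2) ^ r, X j ^ r] q) = aeval ![v i ^ r, v j ^ r] q := by
  have h := comp_aeval_apply (f := ![(X i : PolyS 2) ^ r, X j ^ r]) ((aeval v).restrictScalars ℤ) q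
  convert h using 2
  · simp
  · ext k
    fin_cases k <;> simp

theorem derivDet_symmetricDeriv_ne_zero (hr : r ≠ 0) {q₁ q₂ : MvPolynomial (Fin 2) ℤ}
    (h₁ : aeval ![(1 : ℂ), 0] q₁ ≠ 0) (h₂ : aeval ![(0 : ℂ), 1] q₂ ≠ 0) :
    derivDet (symmetricDeriv a 0 r q₁) (symmetricDeriv a r r q₂) ≠ 0 := by
  have hfactor : derivDet (symmetricDeriv a 0 r q₁) (symmetricDeriv a r r q₂) =
      (X 0 * X 1) ^ a * (X 0 ^ r * aeval ![(X 0 : PolyS 2) ^ r, X 1 ^ r] q₁ *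
        aeval ![(X 1 : PolyS 2) ^ r, X 0 ^ r] q₂ - X 1 ^ r *
        aeval ![(X 1 : PolyS 2) ^ r, X 0 ^ r] q₁ * aeval ![(X 0 : PolyS 2) ^ r, X 1 ^ r] q₂) := by
    simp only [derivDet, symmetricDeriv, mkDerivation_X, Matrix.cons_val_zero, Matrix.cons_val_one,
      Matrix.cons_val_fin_one, pow_zero, mul_one]
    ring
  rw [hfactor]
  refine mul_ne_zero (pow_ne_zero _ (mul_ne_zero (X_ne_zero _) (X_ne_zero _))) fun h => ?_
  have h₁₀ := congrArg (eval ![1, 0]) h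
  simp only [map_sub, map_mul, map_pow, eval_X, eval_aeval_X_pow, map_zero, Matrix.cons_val_zero,
    Matrix.cons_val_one, Matrix.cons_val_fin_one, one_pow, zero_pow hr, one_mul, zero_mul, sub_zero,
    mul_eq_zero] at h₁₀
  exact h₁₀.elim h₁ h₂

theorem symmetricDeriv_pair_basis {m : ℕ} (hr : 0 < r) {q₁ q₂ : MvPolynomial (Fin 2) ℤ}
    (hq₁ : q₁.IsHomogeneous m) (hq₂ : q₂.IsHomogeneous m) (h₁ : aeval ![(1 : ℂ), 0] q₁ ≠ 0)
    (h₂ : aeval ![(0 : ℂ), 1] q₂ ≠ 0)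
    (hθ₁ : InDeriv r ![a, a] (2 * m + 1) (symmetricDeriv a 0 r q₁))
    (hθ₂ : InDeriv r ![a, a] (2 * m + 1) (symmetricDeriv a r r q₂)) :
    LinearIndependent (PolyS 2) ![symmetricDeriv a 0 r q₁, symmetricDeriv a r r q₂] ∧
      ∀ η, InDeriv r ![a, a] (2 * m + 1) η →
        η ∈ Submodule.span (PolyS 2) {symmetricDeriv a 0 r q₁, symmetricDeriv a r r q₂} := by
  have hdet := derivDet_symmetricDeriv_ne_zero (a := a) hr.ne' h₁ h₂
  exact ⟨linearIndependent_pair_of_derivDet_ne_zero hdet, fun η => mem_span_of_inDeriv hr hθ₁ hθ₂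
    (isHomogDeriv_symmetricDeriv hq₁ rfl) (isHomogDeriv_symmetricDeriv hq₂ rfl) (by ring) hdet⟩

theorem inDeriv_symmetricDeriv_binaryForm {k l m n : ℕ} (c : Fin (m + 1) → ℤ)
    (hc : ∀ j < n, ∑ i : Fin (m + 1),
      c i * (((k * r + 1 + r * i).choose j : ℤ) - (l * r + r * (m - i)).choose j) = 0) :
    InDeriv r ![k * r + 1, k * r + 1] n (symmetricDeriv (k * r + 1) (l * r) r (binaryForm c)) := by
  rw [inDeriv_two_iff]
  simp only [symmetricDeriv, mkDerivation_X, Matrix.cons_val_zero, Matrix.cons_val_one]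
  refine ⟨(dvd_mul_right _ _).mul_right _, (dvd_mul_right _ _).mul_right _, fun ζ hζ => ?_⟩
  set A : Fin (m + 1) → ℕ := fun i => k * r + 1 + r * i
  set B : Fin (m + 1) → ℕ := fun i => l * r + r * (m - i)
  have hA (i : Fin (m + 1)) : (C ζ : PolyS 2) ^ A i = C ζ := by
    rw [← map_pow, show A i = r * (k + i) + 1 by ring, pow_succ, pow_mul, hζ, one_pow, one_mul]
  have hB (i : Fin (m + 1)) : (C ζ : PolyS 2) ^ B i = 1 := by
    rw [← map_pow, show B i = r * (l + (m - i)) by ring, pow_mul, hζ, one_pow, map_one]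
  -- with `t = ζ y`, `ζ ^ A i = ζ` and `ζ ^ B i = 1` make `θ (x - ζ y)` antisymmetric in `x, t`
  have hexpand :
      X 0 ^ (k * r + 1) * X 1 ^ (l * r) * aeval ![(X 0 : PolyS 2) ^ r, X 1 ^ r] (binaryForm c) -
        C ζ * (X 1 ^ (k * r + 1) * X 0 ^ (l * r) *
          aeval ![(X 1 : PolyS 2) ^ r, X 0 ^ r] (binaryForm c)) =
      ∑ i, (c i : PolyS 2) * (X 0 ^ A i * (C ζ * X 1) ^ B i - X 0 ^ B i * (C ζ * X 1) ^ A i) := by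
    simp only [aeval_binaryForm, Finset.mul_sum, ← Finset.sum_sub_distrib, mul_pow, hA, hB]
    refine Finset.sum_congr rfl fun i _ => ?_
    simp only [A, B, eq_intCast]
    ring
  rw [hexpand]
  refine sub_pow_dvd_sum_mul_pow_mul_pow_sub _ _ _ A B (D := k * r + 1 + l * r + r * m)
    (fun i => ?_) fun j hj => ?_
  · simp only [A, B]
    zify [i.is_le]
    ring
  · simpa using congrArg (Int.cast : ℤ → PolyS 2) (hc j hj)

end SymmetricDeriv

section Cofactor

-- For `w = k - l - m`, `r * (w + 2 * i) + 1` is the exponent gap `A_i - B_i` of the `i`-th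
-- monomial of the `x`-component of `symmetricDeriv (k * r + 1) (l * r) r (cofactorForm r w m)`.
def cofactorForm (r : ℕ) (w : ℤ) (m : ℕ) : MvPolynomial (Fin 2) ℤ :=
  binaryForm (oddMomentKernel fun i : Fin (m + 1) => (r : ℤ) * (w + 2 * i) + 1)

theorem cofactorForm_isHomogeneous (r : ℕ) (w : ℤ) (m : ℕ) :
    (cofactorForm r w m).IsHomogeneous m :=
  binaryForm_isHomogeneous _

theorem inDeriv_symmetricDeriv_cofactorForm (r k l m : ℕ) :
    InDeriv r ![k * r + 1, k * r + 1] (2 * m + 1)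
      (symmetricDeriv (k * r + 1) (l * r) r (cofactorForm r ((k : ℤ) - l - m) m)) :=
  inDeriv_symmetricDeriv_binaryForm _ fun _ hj =>
    sum_oddMomentKernel_mul_choose_sub_choose_eq_zero _ _ _ (D := k * r + 1 + l * r + r * m)
      (fun i => by push_cast [Nat.cast_sub i.is_le]; ring) (fun i => by zify [i.is_le]; ring) hj

theorem mul_add_one_ne_zero_of_two_le {r : ℤ} (hr : 2 ≤ r) (x : ℤ) : r * x + 1 ≠ 0 := fun h => by
  have := Int.le_of_dvd one_pos (⟨-x, by linarith⟩ : r ∣ 1)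
  omega

theorem oddMomentKernel_ne_zero_of_two_le {r : ℕ} (hr : 2 ≤ r) (w : ℤ) (m : ℕ) (i : Fin (m + 1)) :
    oddMomentKernel (fun i : Fin (m + 1) => (r : ℤ) * (w + 2 * i) + 1) i ≠ 0 := by
  refine oddMomentKernel_ne_zero (fun i => mul_add_one_ne_zero_of_two_le (by exact_mod_cast hr) _)
    (fun i j h => ?_) i
  have hr0 : (r : ℤ) ≠ 0 := by omega
  rcases sq_eq_sq_iff_eq_or_eq_neg.1 h with h | h
  · have hij : ((i : ℕ) : ℤ) = j :=
      mul_left_cancel₀ (mul_ne_zero hr0 two_ne_zero) (by linear_combination h)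
    exact Fin.ext (by exact_mod_cast hij)
  · refine absurd (mul_left_cancel₀ two_ne_zero ?_) (mul_add_one_ne_zero_of_two_le (r := r)
      (by exact_mod_cast hr) (w + i + j))
    linear_combination h

end Cofactor

theorem stmt10_general (r m k : ℕ) (hr : 2 ≤ r) :
    IsFreeWithExponents (InDeriv r ![k * r + 1, k * r + 1] (2 * m + 1))
      ![(m + k) * r + 1, (m + k + 1) * r + 1] ∧
    ∃ q1 q2 : MvPolynomial (Fin 2) ℤ,
      -- `q1`, `q2` are homogeneous of degree `m` and the coefficients of `x^m` and of
      -- `y^m` in each of them are nonzero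
      q1.IsHomogeneous m ∧ q2.IsHomogeneous m ∧
      MvPolynomial.coeff (Finsupp.single (0 : Fin 2) m) q1 ≠ 0 ∧
      MvPolynomial.coeff (Finsupp.single (1 : Fin 2) m) q1 ≠ 0 ∧
      MvPolynomial.coeff (Finsupp.single (0 : Fin 2) m) q2 ≠ 0 ∧
      MvPolynomial.coeff (Finsupp.single (1 : Fin 2) m) q2 ≠ 0 ∧
      -- `θ1 = x^{kr+1} q1(x^r, y^r) ∂_x + y^{kr+1} q1(y^r, x^r) ∂_y` and
      -- `θ2 = x^{kr+1} y^r q2(x^r, y^r) ∂_x + y^{kr+1} x^r q2(y^r, x^r) ∂_y`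
      -- form a basis of `D(A, μ)`:
      (fun θ1 θ2 : Derivation ℂ (PolyS 2) (PolyS 2) =>
          InDeriv r ![k * r + 1, k * r + 1] (2 * m + 1) θ1 ∧
          InDeriv r ![k * r + 1, k * r + 1] (2 * m + 1) θ2 ∧
          LinearIndependent (PolyS 2) ![θ1, θ2] ∧
          ∀ η, InDeriv r ![k * r + 1, k * r + 1] (2 * m + 1) η →
            η ∈ Submodule.span (PolyS 2) {θ1, θ2})
        (MvPolynomial.mkDerivation ℂ
          ![X 0 ^ (k * r + 1) * MvPolynomial.aeval ![(X 0 : PolyS 2) ^ r, X 1 ^ r] q1,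
            X 1 ^ (k * r + 1) * MvPolynomial.aeval ![(X 1 : PolyS 2) ^ r, X 0 ^ r] q1])
        (MvPolynomial.mkDerivation ℂ
          ![X 0 ^ (k * r + 1) * X 1 ^ r * MvPolynomial.aeval ![(X 0 : PolyS 2) ^ r, X 1 ^ r] q2,
            X 1 ^ (k * r + 1) * X 0 ^ r * MvPolynomial.aeval ![(X 1 : PolyS 2) ^ r, X 0 ^ r] q2]) := by
  have hr₀ : 0 < r := by omega
  have hc := oddMomentKernel_ne_zero_of_two_le hr
  set q₁ := cofactorForm r (k - m) m
  set q₂ := cofactorForm r (k - 1 - m) m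
  have hθ₁ : InDeriv r ![k * r + 1, k * r + 1] (2 * m + 1)
      (symmetricDeriv (k * r + 1) 0 r q₁) := by
    simpa using inDeriv_symmetricDeriv_cofactorForm r k 0 m
  have hθ₂ : InDeriv r ![k * r + 1, k * r + 1] (2 * m + 1)
      (symmetricDeriv (k * r + 1) r r q₂) := by
    simpa using inDeriv_symmetricDeriv_cofactorForm r k 1 m
  have hd₁ : IsHomogDeriv (symmetricDeriv (k * r + 1) 0 r q₁) ((m + k) * r + 1) :=
    isHomogDeriv_symmetricDeriv (cofactorForm_isHomogeneous _ _ _) (by ring)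
  have hd₂ : IsHomogDeriv (symmetricDeriv (k * r + 1) r r q₂) ((m + k + 1) * r + 1) :=
    isHomogDeriv_symmetricDeriv (cofactorForm_isHomogeneous _ _ _) (by ring)
  obtain ⟨hind, hspan⟩ := symmetricDeriv_pair_basis hr₀ (cofactorForm_isHomogeneous _ _ _)
    (cofactorForm_isHomogeneous _ _ _)
    (by simpa [q₁, cofactorForm, aeval_one_zero_binaryForm] using hc _ m (Fin.last m))
    (by simpa [q₂, cofactorForm, aeval_zero_one_binaryForm] using hc _ m 0) hθ₁ hθ₂
  rw [symmetricDeriv_zero] at hθ₁ hd₁ hspan hind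
  refine ⟨⟨![_, _], Fin.forall_fin_two.2 ⟨hθ₁, hθ₂⟩, hind, ?_, Fin.forall_fin_two.2 ⟨hd₁, hd₂⟩⟩,
    q₁, q₂, cofactorForm_isHomogeneous _ _ _, cofactorForm_isHomogeneous _ _ _,
    (coeff_single_zero_binaryForm _).trans_ne (hc _ _ _),
    (coeff_single_one_binaryForm _).trans_ne (hc _ _ _),
    (coeff_single_zero_binaryForm _).trans_ne (hc _ _ _),
    (coeff_single_one_binaryForm _).trans_ne (hc _ _ _), hθ₁, hθ₂, hind, hspan⟩
  rwa [Matrix.range_cons_cons_empty]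

theorem stmt10 (r m k : ℕ) (hr : 2 ≤ r) (hm : 1 ≤ m) :
    IsFreeWithExponents (InDeriv r ![k * r + 1, k * r + 1] (2 * m + 1))
      ![(m + k) * r + 1, (m + k + 1) * r + 1] ∧
    ∃ q1 q2 : MvPolynomial (Fin 2) ℤ,
      -- `q1`, `q2` are homogeneous of degree `m` and the coefficients of `x^m` and of
      -- `y^m` in each of them are nonzero
      q1.IsHomogeneous m ∧ q2.IsHomogeneous m ∧
      MvPolynomial.coeff (Finsupp.single (0 : Fin 2) m) q1 ≠ 0 ∧
      MvPolynomial.coeff (Finsupp.single (1 : Fin 2) m) q1 ≠ 0 ∧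
      MvPolynomial.coeff (Finsupp.single (0 : Fin 2) m) q2 ≠ 0 ∧
      MvPolynomial.coeff (Finsupp.single (1 : Fin 2) m) q2 ≠ 0 ∧
      -- `θ1 = x^{kr+1} q1(x^r, y^r) ∂_x + y^{kr+1} q1(y^r, x^r) ∂_y` and
      -- `θ2 = x^{kr+1} y^r q2(x^r, y^r) ∂_x + y^{kr+1} x^r q2(y^r, x^r) ∂_y`
      -- form a basis of `D(A, μ)`:
      (fun θ1 θ2 : Derivation ℂ (PolyS 2) (PolyS 2) =>
          InDeriv r ![k * r + 1, k * r + 1] (2 * m + 1) θ1 ∧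
          InDeriv r ![k * r + 1, k * r + 1] (2 * m + 1) θ2 ∧
          LinearIndependent (PolyS 2) ![θ1, θ2] ∧
          ∀ η, InDeriv r ![k * r + 1, k * r + 1] (2 * m + 1) η →
            η ∈ Submodule.span (PolyS 2) {θ1, θ2})
        (MvPolynomial.mkDerivation ℂ
          ![X 0 ^ (k * r + 1) * MvPolynomial.aeval ![(X 0 : PolyS 2) ^ r, X 1 ^ r] q1,
            X 1 ^ (k * r + 1) * MvPolynomial.aeval ![(X 1 : PolyS 2) ^ r, X 0 ^ r] q1])
        (MvPolynomial.mkDerivation ℂ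
          ![X 0 ^ (k * r + 1) * X 1 ^ r * MvPolynomial.aeval ![(X 0 : PolyS 2) ^ r, X 1 ^ r] q2,
            X 1 ^ (k * r + 1) * X 0 ^ r * MvPolynomial.aeval ![(X 1 : PolyS 2) ^ r, X 0 ^ r] q2]) :=
  stmt10_general r m k hr

end
end

section
/- Let r ≥ 1, m ≥ 1, and A, B ∈ ℕ with B ≥ r(m−1), and suppose A − B is not divisible by r. Then the m×m integer matrix whose (i,j)-entry, for 0 ≤ i, j ≤ m−1, is binom(A + ri, 2j+1) − binom(B − ri, 2j+1) has nonzero determinant. -/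
/-!
Suppose the determinant vanishes, and let `c ≠ 0` be a kernel vector. Writing `S = A + B` and
`binom(x, k) = x(x-1)⋯(x-k+1)/k!` as a polynomial in `x`, the polynomial
`P(x) = ∑ⱼ cⱼ (binom(x, 2j+1) - binom(S - x, 2j+1))` has degree `< 2m`, satisfies
`P(S - x) = -P(x)`, and vanishes at the `m` points `A + ri`, hence also at the `m` points
`B - ri`. The hypothesis `r ∤ A - B` makes these `2m` points distinct, so `P = 0`. The
polynomials `binom(x, k) - binom(S - x, k)` with `k` odd have degree exactly `k`, so they are
linearly independent and `c = 0`.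
-/

open Polynomial
open scoped Nat

namespace Polynomial

theorem linearIndependent_of_natDegree_injective {R ι : Type*} [CommRing R] [IsDomain R]
    {f : ι → R[X]} (hf : ∀ i, f i ≠ 0) (hdeg : Function.Injective fun i => (f i).natDegree) :
    LinearIndependent R f := by
  rw [linearIndependent_iff']
  intro s g hsum i hi
  have hdeg_smul (j : ι) (hj : g j ≠ 0) : (g j • f j).degree = (f j).degree := by
    rw [smul_eq_C_mul, degree_C_mul hj]
  have hpairwise : Set.Pairwise {j | j ∈ s ∧ g j • f j ≠ 0}
      (Function.onFun (· ≠ ·) (degree ∘ fun j => g j • f j)) := by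
    rintro j ⟨-, hj⟩ k ⟨-, hk⟩ hjk
    simp only [Function.onFun, Function.comp_apply, hdeg_smul j (left_ne_zero_of_smul hj),
      hdeg_smul k (left_ne_zero_of_smul hk), degree_eq_natDegree (hf _), ne_eq, Nat.cast_inj]
    exact hdeg.ne hjk
  have hsup := degree_sum_eq_of_disjoint _ s hpairwise
  rw [hsum, degree_zero, eq_comm, Finset.sup_eq_bot_iff] at hsup
  by_contra hgi
  exact hf i (degree_eq_bot.mp (hdeg_smul i hgi ▸ hsup i hi))

section Antisymmetrize

variable {R : Type*} [CommRing R]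

noncomputable def antisymmetrize (s : R) (p : R[X]) : R[X] := p - p.comp (C s - X)

theorem eval_antisymmetrize (s x : R) (p : R[X]) :
    (antisymmetrize s p).eval x = p.eval x - p.eval (s - x) := by
  simp [antisymmetrize, eval_comp]

theorem eval_sub_antisymmetrize (s x : R) (p : R[X]) :
    (antisymmetrize s p).eval (s - x) = -(antisymmetrize s p).eval x := by
  simp only [eval_antisymmetrize, sub_sub_cancel, neg_sub]

theorem natDegree_antisymmetrize_le (s : R) (p : R[X]) :
    (antisymmetrize s p).natDegree ≤ p.natDegree := by
  have h1 : (C s - X : R[X]).natDegree ≤ 1 :=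
    (natDegree_sub_le _ _).trans (max_le ((natDegree_C s).trans_le zero_le_one) natDegree_X_le)
  refine (natDegree_sub_le _ _).trans (max_le le_rfl (natDegree_comp_le.trans ?_))
  simpa using Nat.mul_le_mul_left p.natDegree h1

theorem coeff_antisymmetrize_natDegree [IsDomain R] (s : R) {p : R[X]} (hp : Odd p.natDegree) :
    (antisymmetrize s p).coeff p.natDegree = 2 * p.leadingCoeff := by
  have hlin : (C s - X : R[X]) = -(X - C s) := by ring
  have h1 : (C s - X : R[X]).natDegree = 1 := by rw [hlin, natDegree_neg, natDegree_X_sub_C]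
  have hcomp : (p.comp (C s - X)).coeff p.natDegree = -p.leadingCoeff := by
    have := leadingCoeff_comp (p := p) (h1 ▸ one_ne_zero)
    rw [leadingCoeff, natDegree_comp, h1, mul_one] at this
    rw [this, hlin, leadingCoeff_neg, leadingCoeff_X_sub_C, hp.neg_one_pow, mul_neg_one]
  rw [antisymmetrize, coeff_sub, hcomp, coeff_natDegree, sub_neg_eq_add, two_mul]

theorem natDegree_antisymmetrize [IsDomain R] [NeZero (2 : R)] (s : R) {p : R[X]}
    (hp : Odd p.natDegree) : (antisymmetrize s p).natDegree = p.natDegree := by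
  have hp0 : p ≠ 0 := fun h => by simp [h] at hp
  refine natDegree_eq_of_le_of_coeff_ne_zero (natDegree_antisymmetrize_le s p) ?_
  rw [coeff_antisymmetrize_natDegree s hp]
  exact mul_ne_zero two_ne_zero (leadingCoeff_ne_zero.mpr hp0)

theorem natDegree_antisymmetrize_descPochhammer [IsDomain R] [NeZero (2 : R)] (s : R) {k : ℕ}
    (hk : Odd k) : (antisymmetrize s (descPochhammer R k)).natDegree = k := by
  rw [natDegree_antisymmetrize s (by rwa [descPochhammer_natDegree]), descPochhammer_natDegree]

theorem eval_antisymmetrize_descPochhammer_div_factorial {K : Type*} [Field K] [CharZero K]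
    (a b k : ℕ) :
    ((k ! : K)⁻¹ • antisymmetrize ((a : K) + b) (descPochhammer K k)).eval (a : K) =
      a.choose k - b.choose k := by
  rw [eval_smul, eval_antisymmetrize, add_sub_cancel_left, Nat.cast_choose_eq_descPochhammer_div,
    Nat.cast_choose_eq_descPochhammer_div, smul_eq_mul, ← sub_div, div_eq_inv_mul]

end Antisymmetrize

theorem det_eval_ne_zero_of_antisymmetric {R ι : Type*} [CommRing R] [IsDomain R]
    [Fintype ι] [DecidableEq ι] {s : R} {x : ι → R} {f : ι → R[X]}
    (hf : LinearIndependent R f) (hodd : ∀ j y, (f j).eval (s - y) = -(f j).eval y)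
    (hdeg : ∀ j, (f j).natDegree < 2 * Fintype.card ι)
    (hx : Function.Injective (Sum.elim x fun i => s - x i)) :
    (Matrix.of fun i j => (f j).eval (x i)).det ≠ 0 := by
  intro hdet
  obtain ⟨c, hc, hMc⟩ := Matrix.exists_mulVec_eq_zero_iff.mpr hdet
  set P := ∑ j, c j • f j
  have hPx (i : ι) : P.eval (x i) = 0 := by
    simpa [P, eval_finsetSum, Matrix.mulVec, dotProduct, mul_comm] using congrFun hMc i
  have hPodd (y : R) : P.eval (s - y) = -P.eval y := by
    simp only [P, eval_finsetSum, eval_smul, hodd, smul_neg, Finset.sum_neg_distrib]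
  have hP : P = 0 := by
    refine eq_zero_of_natDegree_lt_card_of_eval_eq_zero P hx ?_ ?_
    · rintro (i | i)
      · exact hPx i
      · simp [hPodd, hPx]
    · obtain ⟨j₀, -⟩ := Function.ne_iff.mp hc
      have hP_le : P.natDegree ≤ 2 * Fintype.card ι - 1 :=
        natDegree_sum_le_of_forall_le _ _ fun j _ =>
          (natDegree_smul_le _ _).trans (Nat.le_sub_one_of_lt (hdeg j))
      have := Fintype.card_pos_iff.mpr ⟨j₀⟩
      rw [Fintype.card_sum]
      omega
  exact hc (_root_.funext fun i => Fintype.linearIndependent_iff.mp hf c hP i)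

end Polynomial

theorem det_choose_sub_choose_ne_zero {m S : ℕ} (a b : Fin m → ℕ) (hab : ∀ i, a i + b i = S)
    (hinj : Function.Injective (Sum.elim a b)) :
    Matrix.det (Matrix.of fun i j : Fin m =>
      ((a i).choose (2 * (j : ℕ) + 1) : ℤ) - ((b i).choose (2 * (j : ℕ) + 1) : ℤ)) ≠ 0 := by
  set f : Fin m → ℚ[X] := fun j =>
    ((2 * (j : ℕ) + 1) ! : ℚ)⁻¹ • antisymmetrize (S : ℚ) (descPochhammer ℚ (2 * (j : ℕ) + 1))
  have hf_natDegree (j : Fin m) : (f j).natDegree = 2 * j + 1 := by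
    rw [natDegree_smul _ (by positivity),
      natDegree_antisymmetrize_descPochhammer _ (odd_two_mul_add_one _)]
  have hf_li : LinearIndependent ℚ f :=
    linearIndependent_of_natDegree_injective (fun j h => by simpa [h] using hf_natDegree j)
      (fun i j h => Fin.ext (by simpa [hf_natDegree] using h))
  have hS (i : Fin m) : (S : ℚ) = a i + b i := by exact_mod_cast (hab i).symm
  have hpoints : (Sum.elim (fun i => (a i : ℚ)) fun i => (S : ℚ) - a i) =
      Nat.cast ∘ Sum.elim a b := by
    ext (i | i)
    · rfl
    · simp [hS i]
  have hdet := det_eval_ne_zero_of_antisymmetric hf_li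
    (fun j y => by simp only [f, eval_smul, eval_sub_antisymmetrize, smul_neg])
    (fun j => by rw [hf_natDegree, Fintype.card_fin]; omega)
    (hpoints ▸ Nat.cast_injective.comp hinj)
  have hentries : (Matrix.of fun i j => (f j).eval (a i : ℚ)) =
      (Int.castRingHom ℚ).mapMatrix (Matrix.of fun i j : Fin m =>
        ((a i).choose (2 * (j : ℕ) + 1) : ℤ) - ((b i).choose (2 * (j : ℕ) + 1) : ℤ)) := by
    ext i j
    rw [Matrix.of_apply, RingHom.mapMatrix_apply, Matrix.map_apply, Matrix.of_apply]
    simp only [f, hS i, eval_antisymmetrize_descPochhammer_div_factorial]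
    simp
  rw [hentries, ← RingHom.map_det] at hdet
  exact fun h => hdet (by rw [h, map_zero])

theorem Fin.mul_val_le_of_mul_pred_le {m r B : ℕ} (hB : r * (m - 1) ≤ B) (i : Fin m) :
    r * i ≤ B :=
  (Nat.mul_le_mul_left r (Nat.le_sub_one_of_lt i.isLt)).trans hB

theorem injective_sumElim_add_mul_sub_mul {m r A B : ℕ} (hr : r ≠ 0) (hB : r * (m - 1) ≤ B)
    (hAB : ¬ (r : ℤ) ∣ (A : ℤ) - B) :
    Function.Injective (Sum.elim (fun i : Fin m => A + r * i) fun i : Fin m => B - r * i) := by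
  have hrB := Fin.mul_val_le_of_mul_pred_le hB
  refine Function.Injective.sumElim (fun i j h => Fin.ext (by simpa [hr] using h))
    (fun i j h => Fin.ext (Nat.eq_of_mul_eq_mul_left (Nat.pos_of_ne_zero hr)
      (by have := hrB i; have := hrB j; omega)))
    (fun i j h => hAB ⟨-(i + j : ℕ), ?_⟩)
  have hsum : A + r * i + r * j = B := by have := hrB j; omega
  push_cast
  linarith [(by exact_mod_cast hsum : (A : ℤ) + r * i + r * j = B)]

theorem stmt13_general (r m : ℕ) (hr : 1 ≤ r) (A B : ℕ)
    (hB : r * (m - 1) ≤ B)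
    (hAB : ¬ ((r : ℤ) ∣ ((A : ℤ) - (B : ℤ)))) :
    Matrix.det (Matrix.of fun i j : Fin m =>
      ((A + r * (i : ℕ)).choose (2 * (j : ℕ) + 1) : ℤ) -
      ((B - r * (i : ℕ)).choose (2 * (j : ℕ) + 1) : ℤ)) ≠ 0 :=
  det_choose_sub_choose_ne_zero (S := A + B) _ _
    (fun i => by have := Fin.mul_val_le_of_mul_pred_le hB i; omega)
    (injective_sumElim_add_mul_sub_mul (by omega) hB hAB)

/-- The `m × m` integer matrix with `(i,j)`-entry
`binom (A + r·i) (2j+1) - binom (B - r·i) (2j+1)` (for `0 ≤ i, j ≤ m-1`) has nonzero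
determinant, provided `B ≥ r(m-1)` and `r ∤ A - B`. -/
theorem stmt13 (r m : ℕ) (hr : 1 ≤ r) (hm : 1 ≤ m) (A B : ℕ)
    (hB : r * (m - 1) ≤ B)
    (hAB : ¬ ((r : ℤ) ∣ ((A : ℤ) - (B : ℤ)))) :
    Matrix.det (Matrix.of fun i j : Fin m =>
      ((A + r * (i : ℕ)).choose (2 * (j : ℕ) + 1) : ℤ) -
      ((B - r * (i : ℕ)).choose (2 * (j : ℕ) + 1) : ℤ)) ≠ 0 :=
  stmt13_general r m hr A B hB hAB
end
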